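/- For a finite commutative ring R with identity 1 ≠ 0 and |R| = l ≥ 2, the number of zero-product pairs satisfies |Ann| ≤ l²/2 + 1, and hence P(R) ≤ 1/2 + 1/l². -/

import Mathlib

/-!
Counting by the first factor, |Ann| = ∑ₓ |ann x|. The annihilator of 0 is R and that of 1 is {0};
for every other x ≠ 0, ann x is the kernel of y ↦ x y, a proper additive subgroup, so by Lagrange
|ann x| ≤ l / 2. Hence 2 |Ann| ≤ 2 l + 2 + (l - 2) l = l² + 2.
-/

open Finset

theorem card_filter_mul_eq_zero_eq_sum {R : Type*} [MulZeroClass R] [Fintype R] [DecidableEq R] :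
    #{p : R × R | p.1 * p.2 = 0} = ∑ x : R, #{y : R | x * y = 0} := by
  simp only [card_filter, Fintype.sum_prod_type]

theorem card_filter_mul_eq_zero_eq_natCard_ker {R : Type*} [NonUnitalNonAssocRing R] [Fintype R]
    [DecidableEq R] (x : R) :
    #{y : R | x * y = 0} = Nat.card (AddMonoidHom.mulLeft x).ker := by
  rw [Nat.card_eq_fintype_card, Fintype.card_subtype]
  simp only [AddMonoidHom.mem_ker, AddMonoidHom.coe_mulLeft]

theorem two_mul_card_filter_mul_eq_zero_le {R : Type*} [NonAssocRing R] [Fintype R] [DecidableEq R]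
    {x : R} (hx : x ≠ 0) :
    2 * #{y : R | x * y = 0} ≤ Fintype.card R := by
  set K := (AddMonoidHom.mulLeft x).ker
  have hK : K ≠ ⊤ := by
    intro h
    have hone : (1 : R) ∈ K := h ▸ AddSubgroup.mem_top 1
    exact hx (by simpa [K] using hone)
  rw [card_filter_mul_eq_zero_eq_natCard_ker, ← Nat.card_eq_fintype_card, ← K.card_mul_index]
  have hindex := K.one_lt_index_of_ne_top hK
  nlinarith [Nat.card_pos (α := K)]

theorem two_mul_card_filter_mul_eq_zero_prod_le {R : Type*} [NonAssocRing R] [Nontrivial R]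
    [Fintype R] [DecidableEq R] :
    2 * #{p : R × R | p.1 * p.2 = 0} ≤ Fintype.card R ^ 2 + 2 := by
  set l := Fintype.card R
  set S := (univ.erase (0 : R)).erase 1
  have hS : #S + 2 = l := by
    rw [card_erase_of_mem (mem_erase.2 ⟨one_ne_zero, mem_univ 1⟩), card_erase_of_mem (mem_univ 0),
      card_univ]
    have hl := Fintype.one_lt_card (α := R)
    omega
  have h0 : #{y : R | 0 * y = 0} = l := by simp [l]
  have h1 : #{y : R | 1 * y = 0} = 1 := by simp [filter_eq']
  have hrest : ∑ x ∈ S, 2 * #{y : R | x * y = 0} ≤ #S * l := by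
    refine sum_le_card_nsmul _ _ _ fun x hx => ?_
    exact two_mul_card_filter_mul_eq_zero_le (ne_of_mem_erase (mem_of_mem_erase hx))
  rw [card_filter_mul_eq_zero_eq_sum, mul_sum, ← add_sum_erase _ _ (mem_univ 0),
    ← add_sum_erase _ _ (mem_erase.2 ⟨one_ne_zero, mem_univ 1⟩), h0, h1]
  rw [← hS] at hrest ⊢
  nlinarith

theorem stmt_11_general (R : Type*) [CommRing R] [Fintype R] [Nontrivial R] [DecidableEq R]
    (l : ℕ) (hl : Fintype.card R = l) :
    2 * (Finset.univ.filter fun p : R × R => p.1 * p.2 = 0).card ≤ l ^ 2 + 2 ∧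
    ((Finset.univ.filter fun p : R × R => p.1 * p.2 = 0).card : ℚ) / (l : ℚ) ^ 2 ≤
      1 / 2 + 1 / (l : ℚ) ^ 2 := by
  have hAnn := two_mul_card_filter_mul_eq_zero_prod_le (R := R)
  rw [hl] at hAnn
  refine ⟨hAnn, ?_⟩
  have hl0 : (0 : ℚ) < (l : ℚ) ^ 2 := by
    have hlpos := hl ▸ Fintype.card_pos (α := R)
    positivity
  have hAnnℚ : 2 * (#{p : R × R | p.1 * p.2 = 0} : ℚ) ≤ (l : ℚ) ^ 2 + 2 := by exact_mod_cast hAnn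
  rw [div_le_iff₀ hl0, add_mul, one_div_mul_cancel hl0.ne']
  linarith

theorem stmt_11 (R : Type*) [CommRing R] [Fintype R] [Nontrivial R] [DecidableEq R]
    (l : ℕ) (hl : Fintype.card R = l) (hl2 : 2 ≤ l) :
    2 * (Finset.univ.filter fun p : R × R => p.1 * p.2 = 0).card ≤ l ^ 2 + 2 ∧
    ((Finset.univ.filter fun p : R × R => p.1 * p.2 = 0).card : ℚ) / (l : ℚ) ^ 2 ≤
      1 / 2 + 1 / (l : ℚ) ^ 2 :=
  stmt_11_general R l hl
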